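/- For every p ∈ (0,1) with p ≠ 1/2, the map Φ_p : RER_[n] → P({0,1}^n) is injective for n = 2 and n = 3, and is not injective for every n ≥ 4. -/

import Mathlib

open scoped Classical BigOperators

noncomputable instance (n : ℕ) : Fintype (Setoid (Fin n)) :=
  Fintype.ofInjective (fun s : Setoid (Fin n) => s.r)
    (fun s t h => Setoid.ext fun a b => iff_of_eq (congrFun (congrFun h a) b))

/-- The weight a single block `B` receives in the color-process formula:
`p · 1[x ≡ 1 on B] + (1-p) · 1[x ≡ 0 on B]`. -/
noncomputable def blockW (n : ℕ) (p : ℝ) (x : Fin n → Bool) (B : Set (Fin n)) : ℝ :=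
  (if ∀ i ∈ B, x i = true then p else 0) + (if ∀ i ∈ B, x i = false then 1 - p else 0)

/-- The probability that the color process of the deterministic partition `π` equals `x`. -/
noncomputable def partW (n : ℕ) (p : ℝ) (π : Setoid (Fin n)) (x : Fin n → Bool) : ℝ :=
  ∏ᶠ B ∈ π.classes, blockW n p x B

/-- The color process `Φ_p(ν)` on `{0,1}^n`, given by its probability mass function. -/
noncomputable def Phi (n : ℕ) (p : ℝ) (ν : Setoid (Fin n) → ℝ) : (Fin n → Bool) → ℝ :=
  fun x => ∑ π : Setoid (Fin n), ν π * partW n p π x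

/-- `ν` is a probability measure on the set of partitions of `{1,…,n}` (an RER). -/
def IsRER (n : ℕ) (ν : Setoid (Fin n) → ℝ) : Prop :=
  (∀ π, 0 ≤ ν π) ∧ ∑ π : Setoid (Fin n), ν π = 1

/-- The action of a permutation of `{1,…,n}` on partitions of `{1,…,n}`. -/
def permSetoid {n : ℕ} (σ : Equiv.Perm (Fin n)) (π : Setoid (Fin n)) : Setoid (Fin n) where
  r a b := π.r (σ.symm a) (σ.symm b)
  iseqv := ⟨fun _ => π.iseqv.refl _, fun h => π.iseqv.symm h, fun h h' => π.iseqv.trans h h'⟩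

/-- `ν` is exchangeable: invariant under every permutation of `{1,…,n}`. -/
def IsExch (n : ℕ) (ν : Setoid (Fin n) → ℝ) : Prop :=
  ∀ (σ : Equiv.Perm (Fin n)) (π : Setoid (Fin n)), ν (permSetoid σ π) = ν π

/-! ### Auxiliary machinery -/

noncomputable def W1 (p : ℝ) (a : Bool) : ℝ := if a = true then p else 1 - p
noncomputable def W2 (p : ℝ) (a b : Bool) : ℝ :=
  (if a = true ∧ b = true then p else 0) + (if a = false ∧ b = false then 1 - p else 0)
noncomputable def W3 (p : ℝ) (a b c : Bool) : ℝ :=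
  (if a = true ∧ b = true ∧ c = true then p else 0) +
  (if a = false ∧ b = false ∧ c = false then 1 - p else 0)
noncomputable def W4 (p : ℝ) (a b c d : Bool) : ℝ :=
  (if a = true ∧ b = true ∧ c = true ∧ d = true then p else 0) +
  (if a = false ∧ b = false ∧ c = false ∧ d = false then 1 - p else 0)

lemma blockW_single {n : ℕ} (p : ℝ) (x : Fin n → Bool) (a : Fin n) :
    blockW n p x {a} = W1 p (x a) := by
  simp [blockW, W1]; cases h : x a <;> simp [h]

lemma blockW_pair {n : ℕ} (p : ℝ) (x : Fin n → Bool) (a b : Fin n) :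
    blockW n p x {a, b} = W2 p (x a) (x b) := by
  simp [blockW, W2, Set.mem_insert_iff, forall_eq_or_imp]

lemma blockW_triple {n : ℕ} (p : ℝ) (x : Fin n → Bool) (a b c : Fin n) :
    blockW n p x {a, b, c} = W3 p (x a) (x b) (x c) := by
  simp [blockW, W3, Set.mem_insert_iff, forall_eq_or_imp, and_assoc]

lemma blockW_quad {n : ℕ} (p : ℝ) (x : Fin n → Bool) (a b c d : Fin n) :
    blockW n p x {a, b, c, d} = W4 p (x a) (x b) (x c) (x d) := by
  simp [blockW, W4, Set.mem_insert_iff, forall_eq_or_imp, and_assoc]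

lemma classes_ker {α : Type*} (f : α → α) (hf : ∀ i, f (f i) = f i) :
    (Setoid.ker f).classes = (fun y => f ⁻¹' {y}) '' {y | f y = y} := by
  ext s
  constructor
  · rintro ⟨y, rfl⟩
    exact ⟨f y, hf y, by ext z; simp [Setoid.ker, Function.onFun]⟩
  · rintro ⟨y, hy, rfl⟩
    exact ⟨y, by ext z; simp [Setoid.ker, Function.onFun, Set.mem_preimage]; rw [hy]⟩

lemma partW_ker {n : ℕ} (p : ℝ) (f : Fin n → Fin n) (hf : ∀ i, f (f i) = f i)
    (T : Finset (Fin n)) (hT : ∀ y, y ∈ T ↔ f y = y) (x : Fin n → Bool) :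
    partW n p (Setoid.ker f) x = ∏ y ∈ T, blockW n p x (f ⁻¹' {y}) := by
  have hset : {y : Fin n | f y = y} = (T : Set (Fin n)) := by ext y; simp [hT]
  rw [partW, classes_ker f hf, finprod_mem_image, hset, finprod_mem_coe_finset]
  intro a ha b hb hab
  simp only [Set.mem_setOf_eq] at ha hb
  have h1 : a ∈ f ⁻¹' {b} := by
    simp only at hab
    rw [← hab]; simp [Set.mem_preimage, ha]
  simp only [Set.mem_preimage, Set.mem_singleton_iff, ha] at h1
  exact h1

lemma ker_ne {α : Type*} {f g : α → α} {a b : α} (h1 : f a = f b) (h2 : g a ≠ g b) :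
    Setoid.ker f ≠ Setoid.ker g := by
  intro h
  have h3 : Setoid.ker f a b := Setoid.ker_def.mpr h1
  rw [h] at h3
  exact h2 (Setoid.ker_def.mp h3)

/-! ### Classification for n = 2, 3 -/

lemma fin2_class (s : Setoid (Fin 2)) :
    s = Setoid.ker (![0,1] : Fin 2 → Fin 2) ∨ s = Setoid.ker (![0,0] : Fin 2 → Fin 2) := by
  by_cases h : s.r 0 1
  · right
    refine Setoid.ext fun a b => ?_
    have h00 : s.r 0 0 := s.iseqv.refl 0
    have h11 : s.r 1 1 := s.iseqv.refl 1
    have h10 : s.r 1 0 := s.iseqv.symm h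
    fin_cases a <;> fin_cases b <;> simp [Setoid.ker_def, h, h00, h11, h10]
  · left
    refine Setoid.ext fun a b => ?_
    have h00 : s.r 0 0 := s.iseqv.refl 0
    have h11 : s.r 1 1 := s.iseqv.refl 1
    have h10 : ¬ s.r 1 0 := fun hh => h (s.iseqv.symm hh)
    fin_cases a <;> fin_cases b <;> simp [Setoid.ker_def, h, h00, h11, h10]

lemma fin3_class (s : Setoid (Fin 3)) :
    s = Setoid.ker (![0,1,2] : Fin 3 → Fin 3) ∨ s = Setoid.ker (![0,0,2] : Fin 3 → Fin 3) ∨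
    s = Setoid.ker (![0,1,0] : Fin 3 → Fin 3) ∨ s = Setoid.ker (![0,1,1] : Fin 3 → Fin 3) ∨
    s = Setoid.ker (![0,0,0] : Fin 3 → Fin 3) := by
  have r0 : s.r 0 0 := s.iseqv.refl 0
  have r1 : s.r 1 1 := s.iseqv.refl 1
  have r2 : s.r 2 2 := s.iseqv.refl 2
  by_cases h01 : s.r 0 1 <;> by_cases h02 : s.r 0 2 <;> by_cases h12 : s.r 1 2
  · right; right; right; right
    refine Setoid.ext fun a b => ?_
    have h10 := s.iseqv.symm h01
    have h20 := s.iseqv.symm h02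
    have h21 := s.iseqv.symm h12
    fin_cases a <;> fin_cases b <;>
      simp [Setoid.ker_def, h01, h02, h12, h10, h20, h21, r0, r1, r2]
  · exact absurd (s.iseqv.trans (s.iseqv.symm h01) h02) h12
  · exact absurd (s.iseqv.trans h01 h12) h02
  · right; left
    refine Setoid.ext fun a b => ?_
    have h10 := s.iseqv.symm h01
    have h20 : ¬ s.r 2 0 := fun hh => h02 (s.iseqv.symm hh)
    have h21 : ¬ s.r 2 1 := fun hh => h12 (s.iseqv.symm hh)
    fin_cases a <;> fin_cases b <;>
      simp [Setoid.ker_def, h01, h02, h12, h10, h20, h21, r0, r1, r2]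
  · exact absurd (s.iseqv.trans h02 (s.iseqv.symm h12)) h01
  · right; right; left
    refine Setoid.ext fun a b => ?_
    have h20 := s.iseqv.symm h02
    have h10 : ¬ s.r 1 0 := fun hh => h01 (s.iseqv.symm hh)
    have h21 : ¬ s.r 2 1 := fun hh => h12 (s.iseqv.symm hh)
    fin_cases a <;> fin_cases b <;>
      simp [Setoid.ker_def, h01, h02, h12, h20, h10, h21, r0, r1, r2]
  · right; right; right; left
    refine Setoid.ext fun a b => ?_
    have h21 := s.iseqv.symm h12
    have h10 : ¬ s.r 1 0 := fun hh => h01 (s.iseqv.symm hh)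
    have h20 : ¬ s.r 2 0 := fun hh => h02 (s.iseqv.symm hh)
    fin_cases a <;> fin_cases b <;>
      simp [Setoid.ker_def, h01, h02, h12, h21, h10, h20, r0, r1, r2]
  · left
    refine Setoid.ext fun a b => ?_
    have h10 : ¬ s.r 1 0 := fun hh => h01 (s.iseqv.symm hh)
    have h20 : ¬ s.r 2 0 := fun hh => h02 (s.iseqv.symm hh)
    have h21 : ¬ s.r 2 1 := fun hh => h12 (s.iseqv.symm hh)
    fin_cases a <;> fin_cases b <;>
      simp [Setoid.ker_def, h01, h02, h12, h10, h20, h21, r0, r1, r2]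

/-! ### partW evaluations for n = 2 -/

lemma partW_2bot (p : ℝ) (x : Fin 2 → Bool) :
    partW 2 p (Setoid.ker (![0,1] : Fin 2 → Fin 2)) x = W1 p (x 0) * W1 p (x 1) := by
  rw [partW_ker p _ (by decide) Finset.univ (by decide)]
  have f0 : (![0,1] : Fin 2 → Fin 2) ⁻¹' {0} = {0} := by ext i; fin_cases i <;> simp
  have f1 : (![0,1] : Fin 2 → Fin 2) ⁻¹' {1} = {1} := by ext i; fin_cases i <;> simp
  rw [Fin.prod_univ_two, f0, f1, blockW_single, blockW_single]

lemma partW_2top (p : ℝ) (x : Fin 2 → Bool) :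
    partW 2 p (Setoid.ker (![0,0] : Fin 2 → Fin 2)) x = W2 p (x 0) (x 1) := by
  rw [partW_ker p _ (by decide) {0} (by decide)]
  have f0 : (![0,0] : Fin 2 → Fin 2) ⁻¹' {0} = {0, 1} := by ext i; fin_cases i <;> simp
  rw [Finset.prod_singleton, f0, blockW_pair]

/-! ### partW evaluations for n = 3 -/

lemma partW_3bot (p : ℝ) (x : Fin 3 → Bool) :
    partW 3 p (Setoid.ker (![0,1,2] : Fin 3 → Fin 3)) x
      = W1 p (x 0) * W1 p (x 1) * W1 p (x 2) := by
  rw [partW_ker p _ (by decide) Finset.univ (by decide)]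
  have f0 : (![0,1,2] : Fin 3 → Fin 3) ⁻¹' {0} = {0} := by ext i; fin_cases i <;> simp
  have f1 : (![0,1,2] : Fin 3 → Fin 3) ⁻¹' {1} = {1} := by ext i; fin_cases i <;> simp
  have f2 : (![0,1,2] : Fin 3 → Fin 3) ⁻¹' {2} = {2} := by ext i; fin_cases i <;> simp
  rw [Fin.prod_univ_three, f0, f1, f2, blockW_single, blockW_single, blockW_single]

lemma partW_301 (p : ℝ) (x : Fin 3 → Bool) :
    partW 3 p (Setoid.ker (![0,0,2] : Fin 3 → Fin 3)) x
      = W2 p (x 0) (x 1) * W1 p (x 2) := by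
  rw [partW_ker p _ (by decide) {0, 2} (by decide)]
  have f0 : (![0,0,2] : Fin 3 → Fin 3) ⁻¹' {0} = {0, 1} := by ext i; fin_cases i <;> simp
  have f2 : (![0,0,2] : Fin 3 → Fin 3) ⁻¹' {2} = {2} := by ext i; fin_cases i <;> simp
  rw [Finset.prod_pair (by decide), f0, f2, blockW_pair, blockW_single]

lemma partW_302 (p : ℝ) (x : Fin 3 → Bool) :
    partW 3 p (Setoid.ker (![0,1,0] : Fin 3 → Fin 3)) x
      = W2 p (x 0) (x 2) * W1 p (x 1) := by
  rw [partW_ker p _ (by decide) {0, 1} (by decide)]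
  have f0 : (![0,1,0] : Fin 3 → Fin 3) ⁻¹' {0} = {0, 2} := by ext i; fin_cases i <;> simp
  have f1 : (![0,1,0] : Fin 3 → Fin 3) ⁻¹' {1} = {1} := by ext i; fin_cases i <;> simp
  rw [Finset.prod_pair (by decide), f0, f1, blockW_pair, blockW_single]

lemma partW_312 (p : ℝ) (x : Fin 3 → Bool) :
    partW 3 p (Setoid.ker (![0,1,1] : Fin 3 → Fin 3)) x
      = W1 p (x 0) * W2 p (x 1) (x 2) := by
  rw [partW_ker p _ (by decide) {0, 1} (by decide)]
  have f0 : (![0,1,1] : Fin 3 → Fin 3) ⁻¹' {0} = {0} := by ext i; fin_cases i <;> simp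
  have f1 : (![0,1,1] : Fin 3 → Fin 3) ⁻¹' {1} = {1, 2} := by ext i; fin_cases i <;> simp
  rw [Finset.prod_pair (by decide), f0, f1, blockW_single, blockW_pair]

lemma partW_3top (p : ℝ) (x : Fin 3 → Bool) :
    partW 3 p (Setoid.ker (![0,0,0] : Fin 3 → Fin 3)) x
      = W3 p (x 0) (x 1) (x 2) := by
  rw [partW_ker p _ (by decide) {0} (by decide)]
  have f0 : (![0,0,0] : Fin 3 → Fin 3) ⁻¹' {0} = {0, 1, 2} := by ext i; fin_cases i <;> simp
  rw [Finset.prod_singleton, f0, blockW_triple]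

theorem aux_inj2 (p : ℝ) (hp0 : 0 < p) (hp1 : p < 1) :
    (∀ ν₁ ν₂ : Setoid (Fin 2) → ℝ, IsRER 2 ν₁ → IsRER 2 ν₂ →
        Phi 2 p ν₁ = Phi 2 p ν₂ → ν₁ = ν₂) := by
  set kb := Setoid.ker (![0,1] : Fin 2 → Fin 2) with hkb
  set kt := Setoid.ker (![0,0] : Fin 2 → Fin 2) with hkt
  have hne : kb ≠ kt := ker_ne (a := 0) (b := 1) (by decide) (by decide) |>.symm
  have huniv : (Finset.univ : Finset (Setoid (Fin 2))) = {kb, kt} := by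
    symm; rw [Finset.eq_univ_iff_forall]
    intro s; rcases fin2_class s with h | h <;> simp [h, hkb, hkt]
  have hsum : ∀ g : Setoid (Fin 2) → ℝ, ∑ π : Setoid (Fin 2), g π = g kb + g kt := by
    intro g; rw [huniv, Finset.sum_pair hne]
  intro ν₁ ν₂ h1 h2 hPhi
  have key : ∀ ν : Setoid (Fin 2) → ℝ, ∀ x, Phi 2 p ν x
      = ν kb * (W1 p (x 0) * W1 p (x 1)) + ν kt * W2 p (x 0) (x 1) := by
    intro ν x
    rw [Phi, hsum, partW_2bot, partW_2top]
  have e1 := congrFun hPhi ![true, false]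
  rw [key, key] at e1
  simp [W1, W2] at e1
  have hb : ν₁ kb = ν₂ kb := by
    rcases e1 with h | h | h
    · exact h
    · linarith
    · linarith
  have hsum1 := h1.2; have hsum2 := h2.2
  rw [hsum] at hsum1 hsum2
  have ht : ν₁ kt = ν₂ kt := by linarith
  funext s
  rcases fin2_class s with h | h <;> rw [h]
  · exact hb
  · exact ht

theorem aux_inj3 (p : ℝ) (hp0 : 0 < p) (hp1 : p < 1) (hp : p ≠ 1/2) :
    (∀ ν₁ ν₂ : Setoid (Fin 3) → ℝ, IsRER 3 ν₁ → IsRER 3 ν₂ →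
        Phi 3 p ν₁ = Phi 3 p ν₂ → ν₁ = ν₂) := by
  set k0 := Setoid.ker (![0,1,2] : Fin 3 → Fin 3) with hk0
  set k01 := Setoid.ker (![0,0,2] : Fin 3 → Fin 3) with hk01
  set k02 := Setoid.ker (![0,1,0] : Fin 3 → Fin 3) with hk02
  set k12 := Setoid.ker (![0,1,1] : Fin 3 → Fin 3) with hk12
  set kt := Setoid.ker (![0,0,0] : Fin 3 → Fin 3) with hkt
  have n1 : k0 ≠ k01 := (ker_ne (a := 0) (b := 1) (by decide) (by decide)).symm
  have n2 : k0 ≠ k02 := (ker_ne (a := 0) (b := 2) (by decide) (by decide)).symm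
  have n3 : k0 ≠ k12 := (ker_ne (a := 1) (b := 2) (by decide) (by decide)).symm
  have n4 : k0 ≠ kt := (ker_ne (a := 0) (b := 1) (by decide) (by decide)).symm
  have n5 : k01 ≠ k02 := ker_ne (a := 0) (b := 1) (by decide) (by decide)
  have n6 : k01 ≠ k12 := ker_ne (a := 0) (b := 1) (by decide) (by decide)
  have n7 : k01 ≠ kt := (ker_ne (a := 0) (b := 2) (by decide) (by decide)).symm
  have n8 : k02 ≠ k12 := ker_ne (a := 0) (b := 2) (by decide) (by decide)
  have n9 : k02 ≠ kt := (ker_ne (a := 0) (b := 1) (by decide) (by decide)).symm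
  have n10 : k12 ≠ kt := (ker_ne (a := 0) (b := 1) (by decide) (by decide)).symm
  have huniv : (Finset.univ : Finset (Setoid (Fin 3))) = {k0, k01, k02, k12, kt} := by
    symm; rw [Finset.eq_univ_iff_forall]
    intro s; rcases fin3_class s with h | h | h | h | h <;> simp [h, hk0, hk01, hk02, hk12, hkt]
  have hsum : ∀ g : Setoid (Fin 3) → ℝ,
      ∑ π : Setoid (Fin 3), g π = g k0 + g k01 + g k02 + g k12 + g kt := by
    intro g
    rw [huniv, Finset.sum_insert (by simp [n1, n2, n3, n4]),
      Finset.sum_insert (by simp [n5, n6, n7]), Finset.sum_insert (by simp [n8, n9]),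
      Finset.sum_pair n10]
    ring
  intro ν₁ ν₂ h1 h2 hPhi
  have key : ∀ ν : Setoid (Fin 3) → ℝ, ∀ x, Phi 3 p ν x
      = ν k0 * (W1 p (x 0) * W1 p (x 1) * W1 p (x 2)) + ν k01 * (W2 p (x 0) (x 1) * W1 p (x 2))
        + ν k02 * (W2 p (x 0) (x 2) * W1 p (x 1)) + ν k12 * (W1 p (x 0) * W2 p (x 1) (x 2))
        + ν kt * W3 p (x 0) (x 1) (x 2) := by
    intro ν x
    rw [Phi, hsum, partW_3bot, partW_301, partW_302, partW_312, partW_3top]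
  have e1 : ν₁ k0 * (p * (1-p) * (1-p)) + ν₁ k12 * (p * (1-p))
      = ν₂ k0 * (p * (1-p) * (1-p)) + ν₂ k12 * (p * (1-p)) := by
    have h := congrFun hPhi ![true, false, false]
    rw [key, key] at h
    simp only [W1, W2, W3] at h
    norm_num [Matrix.cons_val_two] at h
    linear_combination h
  have e2 : ν₁ k0 * (p * p * (1-p)) + ν₁ k12 * (p * (1-p))
      = ν₂ k0 * (p * p * (1-p)) + ν₂ k12 * (p * (1-p)) := by
    have h := congrFun hPhi ![false, true, true]
    rw [key, key] at h
    simp only [W1, W2, W3] at h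
    norm_num [Matrix.cons_val_two] at h
    linear_combination h
  have e3 : ν₁ k0 * (p * (1-p) * (1-p)) + ν₁ k02 * (p * (1-p))
      = ν₂ k0 * (p * (1-p) * (1-p)) + ν₂ k02 * (p * (1-p)) := by
    have h := congrFun hPhi ![false, true, false]
    rw [key, key] at h
    simp only [W1, W2, W3] at h
    norm_num [Matrix.cons_val_two] at h
    linear_combination h
  have e4 : ν₁ k0 * (p * (1-p) * (1-p)) + ν₁ k01 * (p * (1-p))
      = ν₂ k0 * (p * (1-p) * (1-p)) + ν₂ k01 * (p * (1-p)) := by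
    have h := congrFun hPhi ![false, false, true]
    rw [key, key] at h
    simp only [W1, W2, W3] at h
    norm_num [Matrix.cons_val_two] at h
    linear_combination h
  have hq : (0:ℝ) < 1 - p := by linarith
  have hpq : p * (1 - p) ≠ 0 := by positivity
  have hd : (1 - p) - p ≠ 0 := sub_ne_zero.mpr fun hh => hp (by linarith)
  have hc : p * (1 - p) * ((1 - p) - p) ≠ 0 := mul_ne_zero hpq hd
  have h0 : ν₁ k0 = ν₂ k0 := mul_right_cancel₀ hc (by linear_combination e1 - e2)
  have h12 : ν₁ k12 = ν₂ k12 :=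
    mul_right_cancel₀ hpq (by linear_combination e1 - (p * (1-p) * (1-p)) * h0)
  have h02 : ν₁ k02 = ν₂ k02 :=
    mul_right_cancel₀ hpq (by linear_combination e3 - (p * (1-p) * (1-p)) * h0)
  have h01 : ν₁ k01 = ν₂ k01 :=
    mul_right_cancel₀ hpq (by linear_combination e4 - (p * (1-p) * (1-p)) * h0)
  have hsum1 := h1.2; have hsum2 := h2.2
  rw [hsum] at hsum1 hsum2
  have ht : ν₁ kt = ν₂ kt := by linarith
  funext s
  rcases fin3_class s with h | h | h | h | h <;> rw [h]
  exacts [h0, h01, h02, h12, ht]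

def EF (n : ℕ) (hn : 4 ≤ n) (g : Fin 4 → Fin 4) : Fin n → Fin n :=
  fun i => if h : (i : ℕ) < 4 then Fin.castLE hn (g ⟨i, h⟩) else i
lemma EF_e {n : ℕ} (hn : 4 ≤ n) (g : Fin 4 → Fin 4) (k : Fin 4) :
    EF n hn g (Fin.castLE hn k) = Fin.castLE hn (g k) := by
  have h : ((Fin.castLE hn k : Fin n) : ℕ) < 4 := k.isLt
  simp only [EF, dif_pos h]
  congr 1
lemma EF_idem {n : ℕ} (hn : 4 ≤ n) (g : Fin 4 → Fin 4) (hg : ∀ k, g (g k) = g k) :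
    ∀ i, EF n hn g (EF n hn g i) = EF n hn g i := by
  intro i
  by_cases h : (i : ℕ) < 4
  · have h1 : EF n hn g i = Fin.castLE hn (g ⟨i, h⟩) := dif_pos h
    rw [h1, EF_e, hg]
  · have h1 : EF n hn g i = i := dif_neg h
    rw [h1, h1]
lemma EF_fiber_low {n : ℕ} (hn : 4 ≤ n) (g : Fin 4 → Fin 4) (k : Fin 4) :
    EF n hn g ⁻¹' {Fin.castLE hn k} = Fin.castLE hn '' (g ⁻¹' {k}) := by
  ext j
  simp only [Set.mem_preimage, Set.mem_singleton_iff, Set.mem_image]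
  constructor
  · intro hj
    by_cases h : (j : ℕ) < 4
    · refine ⟨⟨j, h⟩, ?_, Fin.ext rfl⟩
      have h1 : EF n hn g j = Fin.castLE hn (g ⟨j, h⟩) := dif_pos h
      rw [h1] at hj
      exact Fin.castLE_injective hn hj
    · have h1 : EF n hn g j = j := dif_neg h
      rw [h1] at hj
      exact absurd (hj ▸ k.isLt : (j : ℕ) < 4) h
  · rintro ⟨m, hm, rfl⟩
    rw [EF_e]
    exact congrArg _ hm
lemma EF_fiber_high {n : ℕ} (hn : 4 ≤ n) (g : Fin 4 → Fin 4) (i : Fin n)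
    (hi : ¬ (i : ℕ) < 4) : EF n hn g ⁻¹' {i} = {i} := by
  ext j
  simp only [Set.mem_preimage, Set.mem_singleton_iff]
  constructor
  · intro hj
    by_cases h : (j : ℕ) < 4
    · have h1 : EF n hn g j = Fin.castLE hn (g ⟨j, h⟩) := dif_pos h
      rw [h1] at hj
      exact absurd (hj ▸ (g ⟨j, h⟩).isLt : (i : ℕ) < 4) hi
    · have h1 : EF n hn g j = j := dif_neg h
      rwa [h1] at hj
  · rintro rfl
    exact dif_neg hi
lemma blockW_image {n : ℕ} (hn : 4 ≤ n) (p : ℝ) (x : Fin n → Bool) (S : Set (Fin 4)) :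
    blockW n p x (Fin.castLE hn '' S) = blockW 4 p (x ∘ Fin.castLE hn) S := by
  simp [blockW, Set.forall_mem_image]

lemma partW_EF {n : ℕ} (hn : 4 ≤ n) (p : ℝ) (g : Fin 4 → Fin 4)
    (hg : ∀ k, g (g k) = g k) (T : Finset (Fin 4)) (hT : ∀ k, k ∈ T ↔ g k = k)
    (x : Fin n → Bool) :
    partW n p (Setoid.ker (EF n hn g)) x
      = (∏ k ∈ T, blockW 4 p (x ∘ Fin.castLE hn) (g ⁻¹' {k}))
        * ∏ i ∈ Finset.univ.filter (fun i : Fin n => ¬ (i : ℕ) < 4), W1 p (x i) := by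
  have hTF : ∀ y : Fin n, y ∈ T.image (Fin.castLE hn) ∪
      Finset.univ.filter (fun i : Fin n => ¬ (i : ℕ) < 4) ↔ EF n hn g y = y := by
    intro y
    by_cases h : (y : ℕ) < 4
    · have hy : y = Fin.castLE hn ⟨y, h⟩ := Fin.ext rfl
      simp only [Finset.mem_union, Finset.mem_image, Finset.mem_filter, Finset.mem_univ,
        true_and, h, not_true_eq_false, and_false, or_false]
      constructor
      · rintro ⟨k, hk, hky⟩
        rw [← hky, EF_e]
        rw [(hT k).mp hk]
      · intro hEF
        refine ⟨⟨y, h⟩, ?_, hy.symm⟩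
        rw [hT]
        have : EF n hn g y = Fin.castLE hn (g ⟨y, h⟩) := dif_pos h
        rw [this] at hEF
        exact Fin.castLE_injective hn (hEF.trans hy)
    · simp only [Finset.mem_union, Finset.mem_image, Finset.mem_filter, Finset.mem_univ,
        true_and, h, not_false_eq_true, or_true, true_iff]
      exact dif_neg h
  rw [partW_ker p _ (EF_idem hn g hg) _ hTF]
  rw [Finset.prod_union, Finset.prod_image]
  · congr 1
    · exact Finset.prod_congr rfl fun k _ => by rw [EF_fiber_low, blockW_image]
    · refine Finset.prod_congr rfl fun i hi => ?_
      rw [Finset.mem_filter] at hi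
      rw [EF_fiber_high hn g i hi.2, blockW_single]
  · exact fun a _ b _ h => Fin.castLE_injective hn h
  · rw [Finset.disjoint_left]
    intro a ha hb
    rw [Finset.mem_image] at ha
    rw [Finset.mem_filter] at hb
    obtain ⟨k, _, rfl⟩ := ha
    exact hb.2 k.isLt

lemma Qev0 (p : ℝ) (y : Fin 4 → Bool) :
    ∏ k ∈ (Finset.univ : Finset (Fin 4)), blockW 4 p y ((![0,1,2,3] : Fin 4 → Fin 4) ⁻¹' {k})
      = W1 p (y 0) * W1 p (y 1) * W1 p (y 2) * W1 p (y 3) := by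
  have f0 : (![0,1,2,3] : Fin 4 → Fin 4) ⁻¹' {0} = {0} := by ext i; fin_cases i <;> simp
  have f1 : (![0,1,2,3] : Fin 4 → Fin 4) ⁻¹' {1} = {1} := by ext i; fin_cases i <;> simp
  have f2 : (![0,1,2,3] : Fin 4 → Fin 4) ⁻¹' {2} = {2} := by ext i; fin_cases i <;> simp
  have f3 : (![0,1,2,3] : Fin 4 → Fin 4) ⁻¹' {3} = {3} := by ext i; fin_cases i <;> simp
  rw [Fin.prod_univ_four, f0, f1, f2, f3, blockW_single, blockW_single, blockW_single,
    blockW_single]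

lemma Qev1 (p : ℝ) (y : Fin 4 → Bool) :
    ∏ k ∈ ({0,2,3} : Finset (Fin 4)), blockW 4 p y ((![0,0,2,3] : Fin 4 → Fin 4) ⁻¹' {k})
      = W2 p (y 0) (y 1) * (W1 p (y 2) * W1 p (y 3)) := by
  have f0 : (![0,0,2,3] : Fin 4 → Fin 4) ⁻¹' {0} = ({0,1} : Set (Fin 4)) := by
    ext i; fin_cases i <;> simp
  have f2 : (![0,0,2,3] : Fin 4 → Fin 4) ⁻¹' {2} = ({2} : Set (Fin 4)) := by
    ext i; fin_cases i <;> simp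
  have f3 : (![0,0,2,3] : Fin 4 → Fin 4) ⁻¹' {3} = ({3} : Set (Fin 4)) := by
    ext i; fin_cases i <;> simp
  rw [Finset.prod_insert (by decide), Finset.prod_pair (by decide), f0, f2, f3, blockW_pair, blockW_single, blockW_single]

lemma Qev2 (p : ℝ) (y : Fin 4 → Bool) :
    ∏ k ∈ ({0,1,3} : Finset (Fin 4)), blockW 4 p y ((![0,1,0,3] : Fin 4 → Fin 4) ⁻¹' {k})
      = W2 p (y 0) (y 2) * (W1 p (y 1) * W1 p (y 3)) := by
  have f0 : (![0,1,0,3] : Fin 4 → Fin 4) ⁻¹' {0} = ({0,2} : Set (Fin 4)) := by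
    ext i; fin_cases i <;> simp
  have f1 : (![0,1,0,3] : Fin 4 → Fin 4) ⁻¹' {1} = ({1} : Set (Fin 4)) := by
    ext i; fin_cases i <;> simp
  have f3 : (![0,1,0,3] : Fin 4 → Fin 4) ⁻¹' {3} = ({3} : Set (Fin 4)) := by
    ext i; fin_cases i <;> simp
  rw [Finset.prod_insert (by decide), Finset.prod_pair (by decide), f0, f1, f3, blockW_pair, blockW_single, blockW_single]

lemma Qev3 (p : ℝ) (y : Fin 4 → Bool) :
    ∏ k ∈ ({0,1,2} : Finset (Fin 4)), blockW 4 p y ((![0,1,2,0] : Fin 4 → Fin 4) ⁻¹' {k})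
      = W2 p (y 0) (y 3) * (W1 p (y 1) * W1 p (y 2)) := by
  have f0 : (![0,1,2,0] : Fin 4 → Fin 4) ⁻¹' {0} = ({0,3} : Set (Fin 4)) := by
    ext i; fin_cases i <;> simp
  have f1 : (![0,1,2,0] : Fin 4 → Fin 4) ⁻¹' {1} = ({1} : Set (Fin 4)) := by
    ext i; fin_cases i <;> simp
  have f2 : (![0,1,2,0] : Fin 4 → Fin 4) ⁻¹' {2} = ({2} : Set (Fin 4)) := by
    ext i; fin_cases i <;> simp
  rw [Finset.prod_insert (by decide), Finset.prod_pair (by decide), f0, f1, f2, blockW_pair, blockW_single, blockW_single]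

lemma Qev4 (p : ℝ) (y : Fin 4 → Bool) :
    ∏ k ∈ ({0,1,3} : Finset (Fin 4)), blockW 4 p y ((![0,1,1,3] : Fin 4 → Fin 4) ⁻¹' {k})
      = W1 p (y 0) * (W2 p (y 1) (y 2) * W1 p (y 3)) := by
  have f0 : (![0,1,1,3] : Fin 4 → Fin 4) ⁻¹' {0} = ({0} : Set (Fin 4)) := by
    ext i; fin_cases i <;> simp
  have f1 : (![0,1,1,3] : Fin 4 → Fin 4) ⁻¹' {1} = ({1,2} : Set (Fin 4)) := by
    ext i; fin_cases i <;> simp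
  have f3 : (![0,1,1,3] : Fin 4 → Fin 4) ⁻¹' {3} = ({3} : Set (Fin 4)) := by
    ext i; fin_cases i <;> simp
  rw [Finset.prod_insert (by decide), Finset.prod_pair (by decide), f0, f1, f3, blockW_single, blockW_pair, blockW_single]

lemma Qev5 (p : ℝ) (y : Fin 4 → Bool) :
    ∏ k ∈ ({0,1,2} : Finset (Fin 4)), blockW 4 p y ((![0,1,2,1] : Fin 4 → Fin 4) ⁻¹' {k})
      = W1 p (y 0) * (W2 p (y 1) (y 3) * W1 p (y 2)) := by
  have f0 : (![0,1,2,1] : Fin 4 → Fin 4) ⁻¹' {0} = ({0} : Set (Fin 4)) := by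
    ext i; fin_cases i <;> simp
  have f1 : (![0,1,2,1] : Fin 4 → Fin 4) ⁻¹' {1} = ({1,3} : Set (Fin 4)) := by
    ext i; fin_cases i <;> simp
  have f2 : (![0,1,2,1] : Fin 4 → Fin 4) ⁻¹' {2} = ({2} : Set (Fin 4)) := by
    ext i; fin_cases i <;> simp
  rw [Finset.prod_insert (by decide), Finset.prod_pair (by decide), f0, f1, f2, blockW_single, blockW_pair, blockW_single]

lemma Qev6 (p : ℝ) (y : Fin 4 → Bool) :
    ∏ k ∈ ({0,1,2} : Finset (Fin 4)), blockW 4 p y ((![0,1,2,2] : Fin 4 → Fin 4) ⁻¹' {k})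
      = W1 p (y 0) * (W1 p (y 1) * W2 p (y 2) (y 3)) := by
  have f0 : (![0,1,2,2] : Fin 4 → Fin 4) ⁻¹' {0} = ({0} : Set (Fin 4)) := by
    ext i; fin_cases i <;> simp
  have f1 : (![0,1,2,2] : Fin 4 → Fin 4) ⁻¹' {1} = ({1} : Set (Fin 4)) := by
    ext i; fin_cases i <;> simp
  have f2 : (![0,1,2,2] : Fin 4 → Fin 4) ⁻¹' {2} = ({2,3} : Set (Fin 4)) := by
    ext i; fin_cases i <;> simp
  rw [Finset.prod_insert (by decide), Finset.prod_pair (by decide), f0, f1, f2, blockW_single, blockW_single, blockW_pair]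

lemma Qev7 (p : ℝ) (y : Fin 4 → Bool) :
    ∏ k ∈ ({0,2} : Finset (Fin 4)), blockW 4 p y ((![0,0,2,2] : Fin 4 → Fin 4) ⁻¹' {k})
      = W2 p (y 0) (y 1) * W2 p (y 2) (y 3) := by
  have f0 : (![0,0,2,2] : Fin 4 → Fin 4) ⁻¹' {0} = ({0,1} : Set (Fin 4)) := by
    ext i; fin_cases i <;> simp
  have f2 : (![0,0,2,2] : Fin 4 → Fin 4) ⁻¹' {2} = ({2,3} : Set (Fin 4)) := by
    ext i; fin_cases i <;> simp
  rw [Finset.prod_pair (by decide), f0, f2, blockW_pair, blockW_pair]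

lemma Qev8 (p : ℝ) (y : Fin 4 → Bool) :
    ∏ k ∈ ({0,1} : Finset (Fin 4)), blockW 4 p y ((![0,1,0,1] : Fin 4 → Fin 4) ⁻¹' {k})
      = W2 p (y 0) (y 2) * W2 p (y 1) (y 3) := by
  have f0 : (![0,1,0,1] : Fin 4 → Fin 4) ⁻¹' {0} = ({0,2} : Set (Fin 4)) := by
    ext i; fin_cases i <;> simp
  have f1 : (![0,1,0,1] : Fin 4 → Fin 4) ⁻¹' {1} = ({1,3} : Set (Fin 4)) := by
    ext i; fin_cases i <;> simp
  rw [Finset.prod_pair (by decide), f0, f1, blockW_pair, blockW_pair]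

lemma Qev9 (p : ℝ) (y : Fin 4 → Bool) :
    ∏ k ∈ ({0,1} : Finset (Fin 4)), blockW 4 p y ((![0,1,1,0] : Fin 4 → Fin 4) ⁻¹' {k})
      = W2 p (y 0) (y 3) * W2 p (y 1) (y 2) := by
  have f0 : (![0,1,1,0] : Fin 4 → Fin 4) ⁻¹' {0} = ({0,3} : Set (Fin 4)) := by
    ext i; fin_cases i <;> simp
  have f1 : (![0,1,1,0] : Fin 4 → Fin 4) ⁻¹' {1} = ({1,2} : Set (Fin 4)) := by
    ext i; fin_cases i <;> simp
  rw [Finset.prod_pair (by decide), f0, f1, blockW_pair, blockW_pair]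

lemma Qev10 (p : ℝ) (y : Fin 4 → Bool) :
    ∏ k ∈ ({0,3} : Finset (Fin 4)), blockW 4 p y ((![0,0,0,3] : Fin 4 → Fin 4) ⁻¹' {k})
      = W3 p (y 0) (y 1) (y 2) * W1 p (y 3) := by
  have f0 : (![0,0,0,3] : Fin 4 → Fin 4) ⁻¹' {0} = ({0,1,2} : Set (Fin 4)) := by
    ext i; fin_cases i <;> simp
  have f3 : (![0,0,0,3] : Fin 4 → Fin 4) ⁻¹' {3} = ({3} : Set (Fin 4)) := by
    ext i; fin_cases i <;> simp
  rw [Finset.prod_pair (by decide), f0, f3, blockW_triple, blockW_single]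

lemma Qev11 (p : ℝ) (y : Fin 4 → Bool) :
    ∏ k ∈ ({0,2} : Finset (Fin 4)), blockW 4 p y ((![0,0,2,0] : Fin 4 → Fin 4) ⁻¹' {k})
      = W3 p (y 0) (y 1) (y 3) * W1 p (y 2) := by
  have f0 : (![0,0,2,0] : Fin 4 → Fin 4) ⁻¹' {0} = ({0,1,3} : Set (Fin 4)) := by
    ext i; fin_cases i <;> simp
  have f2 : (![0,0,2,0] : Fin 4 → Fin 4) ⁻¹' {2} = ({2} : Set (Fin 4)) := by
    ext i; fin_cases i <;> simp
  rw [Finset.prod_pair (by decide), f0, f2, blockW_triple, blockW_single]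

lemma Qev12 (p : ℝ) (y : Fin 4 → Bool) :
    ∏ k ∈ ({0,1} : Finset (Fin 4)), blockW 4 p y ((![0,1,0,0] : Fin 4 → Fin 4) ⁻¹' {k})
      = W3 p (y 0) (y 2) (y 3) * W1 p (y 1) := by
  have f0 : (![0,1,0,0] : Fin 4 → Fin 4) ⁻¹' {0} = ({0,2,3} : Set (Fin 4)) := by
    ext i; fin_cases i <;> simp
  have f1 : (![0,1,0,0] : Fin 4 → Fin 4) ⁻¹' {1} = ({1} : Set (Fin 4)) := by
    ext i; fin_cases i <;> simp
  rw [Finset.prod_pair (by decide), f0, f1, blockW_triple, blockW_single]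

lemma Qev13 (p : ℝ) (y : Fin 4 → Bool) :
    ∏ k ∈ ({0,1} : Finset (Fin 4)), blockW 4 p y ((![0,1,1,1] : Fin 4 → Fin 4) ⁻¹' {k})
      = W1 p (y 0) * W3 p (y 1) (y 2) (y 3) := by
  have f0 : (![0,1,1,1] : Fin 4 → Fin 4) ⁻¹' {0} = ({0} : Set (Fin 4)) := by
    ext i; fin_cases i <;> simp
  have f1 : (![0,1,1,1] : Fin 4 → Fin 4) ⁻¹' {1} = ({1,2,3} : Set (Fin 4)) := by
    ext i; fin_cases i <;> simp
  rw [Finset.prod_pair (by decide), f0, f1, blockW_single, blockW_triple]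

lemma Qev14 (p : ℝ) (y : Fin 4 → Bool) :
    ∏ k ∈ ({0} : Finset (Fin 4)), blockW 4 p y ((![0,0,0,0] : Fin 4 → Fin 4) ⁻¹' {k})
      = W4 p (y 0) (y 1) (y 2) (y 3) := by
  have f0 : (![0,0,0,0] : Fin 4 → Fin 4) ⁻¹' {0} = ({0,1,2,3} : Set (Fin 4)) := by
    ext i; fin_cases i <;> simp
  rw [Finset.prod_singleton, f0, blockW_quad]
lemma key_id (p : ℝ) (y : Fin 4 → Bool) :
    3 * (W1 p (y 0) * W1 p (y 1) * W1 p (y 2) * W1 p (y 3))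
    - W2 p (y 0) (y 1) * (W1 p (y 2) * W1 p (y 3))
    - W2 p (y 0) (y 2) * (W1 p (y 1) * W1 p (y 3))
    - W2 p (y 0) (y 3) * (W1 p (y 1) * W1 p (y 2))
    - W1 p (y 0) * (W2 p (y 1) (y 2) * W1 p (y 3))
    - W1 p (y 0) * (W2 p (y 1) (y 3) * W1 p (y 2))
    - W1 p (y 0) * (W1 p (y 1) * W2 p (y 2) (y 3))
    + (1 - 3 * p * (1 - p)) * (W2 p (y 0) (y 1) * W2 p (y 2) (y 3)
        + W2 p (y 0) (y 2) * W2 p (y 1) (y 3) + W2 p (y 0) (y 3) * W2 p (y 1) (y 2))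
    + 3 * p * (1 - p) * (W3 p (y 0) (y 1) (y 2) * W1 p (y 3)
        + W3 p (y 0) (y 1) (y 3) * W1 p (y 2) + W3 p (y 0) (y 2) (y 3) * W1 p (y 1)
        + W1 p (y 0) * W3 p (y 1) (y 2) (y 3))
    - 3 * p * (1 - p) * W4 p (y 0) (y 1) (y 2) (y 3) = 0 := by
  cases h0 : y 0 <;> cases h1 : y 1 <;> cases h2 : y 2 <;> cases h3 : y 3 <;>
    simp [W1, W2, W3, W4, h0, h1, h2, h3] <;> ring
def Gvec : Fin 15 → Fin 4 → Fin 4 :=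
  ![![0,1,2,3], ![0,0,2,3], ![0,1,0,3], ![0,1,2,0], ![0,1,1,3], ![0,1,2,1], ![0,1,2,2],
    ![0,0,2,2], ![0,1,0,1], ![0,1,1,0], ![0,0,0,3], ![0,0,2,0], ![0,1,0,0], ![0,1,1,1],
    ![0,0,0,0]]

noncomputable def cvec (p : ℝ) : Fin 15 → ℝ :=
  ![3, -1, -1, -1, -1, -1, -1, 1 - 3*p*(1-p), 1 - 3*p*(1-p), 1 - 3*p*(1-p),
    3*p*(1-p), 3*p*(1-p), 3*p*(1-p), 3*p*(1-p), -(3*p*(1-p))]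

noncomputable def Svec (n : ℕ) (hn : 4 ≤ n) : Fin 15 → Setoid (Fin n) :=
  fun i => Setoid.ker (EF n hn (Gvec i))

noncomputable def Qcl (p : ℝ) (y : Fin 4 → Bool) : Fin 15 → ℝ :=
  ![W1 p (y 0) * W1 p (y 1) * W1 p (y 2) * W1 p (y 3),
    W2 p (y 0) (y 1) * (W1 p (y 2) * W1 p (y 3)),
    W2 p (y 0) (y 2) * (W1 p (y 1) * W1 p (y 3)),
    W2 p (y 0) (y 3) * (W1 p (y 1) * W1 p (y 2)),
    W1 p (y 0) * (W2 p (y 1) (y 2) * W1 p (y 3)),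
    W1 p (y 0) * (W2 p (y 1) (y 3) * W1 p (y 2)),
    W1 p (y 0) * (W1 p (y 1) * W2 p (y 2) (y 3)),
    W2 p (y 0) (y 1) * W2 p (y 2) (y 3),
    W2 p (y 0) (y 2) * W2 p (y 1) (y 3),
    W2 p (y 0) (y 3) * W2 p (y 1) (y 2),
    W3 p (y 0) (y 1) (y 2) * W1 p (y 3),
    W3 p (y 0) (y 1) (y 3) * W1 p (y 2),
    W3 p (y 0) (y 2) (y 3) * W1 p (y 1),
    W1 p (y 0) * W3 p (y 1) (y 2) (y 3),
    W4 p (y 0) (y 1) (y 2) (y 3)]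

lemma Qcl_sum (p : ℝ) (y : Fin 4 → Bool) : ∑ i : Fin 15, cvec p i * Qcl p y i = 0 := by
  simp only [Fin.sum_univ_succ, Fin.sum_univ_zero, cvec, Qcl, Matrix.cons_val_zero,
    Matrix.cons_val_succ, add_zero]
  linear_combination key_id p y

lemma cvec_sum (p : ℝ) : ∑ i : Fin 15, cvec p i = 0 := by
  simp only [Fin.sum_univ_succ, Fin.sum_univ_zero, cvec, Matrix.cons_val_zero,
    Matrix.cons_val_succ, add_zero]
  ring

lemma cvec_bound (p : ℝ) (hp0 : 0 < p) (hp1 : p < 1) (i : Fin 15) :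
    -3 ≤ cvec p i ∧ cvec p i ≤ 3 := by
  have h1 : 0 < p * (1 - p) := by nlinarith
  have h2 : p * (1 - p) ≤ 1 := by nlinarith
  fin_cases i <;> constructor <;> norm_num [cvec, Matrix.cons_val_succ] <;> nlinarith

lemma partW_Svec {n : ℕ} (hn : 4 ≤ n) (p : ℝ) (x : Fin n → Bool) (i : Fin 15) :
    partW n p (Svec n hn i) x
      = Qcl p (x ∘ Fin.castLE hn) i
        * ∏ j ∈ Finset.univ.filter (fun j : Fin n => ¬ (j : ℕ) < 4), W1 p (x j) := by
  fin_cases i <;>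
    simp only [Svec, Gvec, Qcl] <;>
    norm_num [Matrix.cons_val_succ]
  · rw [partW_EF hn p _ (by decide) Finset.univ (by decide), Qev0] <;> simp [Function.comp, not_lt]
  · rw [partW_EF hn p _ (by decide) {0,2,3} (by decide), Qev1] <;> simp [Function.comp, not_lt]
  · rw [partW_EF hn p _ (by decide) {0,1,3} (by decide), Qev2] <;> simp [Function.comp, not_lt]
  · rw [partW_EF hn p _ (by decide) {0,1,2} (by decide), Qev3] <;> simp [Function.comp, not_lt]
  · rw [partW_EF hn p _ (by decide) {0,1,3} (by decide), Qev4] <;> simp [Function.comp, not_lt]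
  · rw [partW_EF hn p _ (by decide) {0,1,2} (by decide), Qev5] <;> simp [Function.comp, not_lt]
  · rw [partW_EF hn p _ (by decide) {0,1,2} (by decide), Qev6] <;> simp [Function.comp, not_lt]
  · rw [partW_EF hn p _ (by decide) {0,2} (by decide), Qev7] <;> simp [Function.comp, not_lt]
  · rw [partW_EF hn p _ (by decide) {0,1} (by decide), Qev8] <;> simp [Function.comp, not_lt]
  · rw [partW_EF hn p _ (by decide) {0,1} (by decide), Qev9] <;> simp [Function.comp, not_lt]
  · rw [partW_EF hn p _ (by decide) {0,3} (by decide), Qev10] <;> simp [Function.comp, not_lt]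
  · rw [partW_EF hn p _ (by decide) {0,2} (by decide), Qev11] <;> simp [Function.comp, not_lt]
  · rw [partW_EF hn p _ (by decide) {0,1} (by decide), Qev12] <;> simp [Function.comp, not_lt]
  · rw [partW_EF hn p _ (by decide) {0,1} (by decide), Qev13] <;> simp [Function.comp, not_lt]
  · rw [partW_EF hn p _ (by decide) {0} (by decide), Qev14] <;> simp [Function.comp, not_lt]
lemma EF_ker_ne {n : ℕ} (hn : 4 ≤ n) {g g' : Fin 4 → Fin 4} {a b : Fin 4}
    (h1 : g a = g b) (h2 : g' a ≠ g' b) :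
    Setoid.ker (EF n hn g) ≠ Setoid.ker (EF n hn g') := by
  intro h
  have h3 : Setoid.ker (EF n hn g) (Fin.castLE hn a) (Fin.castLE hn b) :=
    Setoid.ker_def.mpr (by rw [EF_e, EF_e, h1])
  rw [h] at h3
  have h4 := Setoid.ker_def.mp h3
  rw [EF_e, EF_e] at h4
  exact h2 (Fin.castLE_injective hn h4)

theorem aux_part3 (p : ℝ) (hp0 : 0 < p) (hp1 : p < 1) :
    ∀ n : ℕ, 4 ≤ n → ∃ ν₁ ν₂ : Setoid (Fin n) → ℝ,
      IsRER n ν₁ ∧ IsRER n ν₂ ∧ ν₁ ≠ ν₂ ∧ Phi n p ν₁ = Phi n p ν₂ := by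
  intro n hn
  set N : ℝ := (Fintype.card (Setoid (Fin n)) : ℝ) with hNdef
  have hN : 0 < N := by
    rw [hNdef]
    exact_mod_cast @Fintype.card_pos _ _ ⟨(⊥ : Setoid (Fin n))⟩
  set ε : ℝ := 1 / (45 * N) with hεdef
  have hε : 0 < ε := by rw [hεdef]; positivity
  have h45ε : 45 * ε = 1 / N := by rw [hεdef]; field_simp
  set μ : Setoid (Fin n) → ℝ :=
    fun π => ∑ i : Fin 15, cvec p i * (if π = Svec n hn i then 1 else 0) with hμdef
  have hterm : ∀ (π : Setoid (Fin n)) (i : Fin 15),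
      -3 ≤ cvec p i * (if π = Svec n hn i then (1:ℝ) else 0) ∧
      cvec p i * (if π = Svec n hn i then (1:ℝ) else 0) ≤ 3 := by
    intro π i
    obtain ⟨hl, hr⟩ := cvec_bound p hp0 hp1 i
    split_ifs with h
    · constructor <;> linarith [mul_one (cvec p i)]
    · norm_num
  have hbound : ∀ π, -45 ≤ μ π ∧ μ π ≤ 45 := by
    intro π
    constructor
    · calc (-45:ℝ) = ∑ _i : Fin 15, (-3:ℝ) := by norm_num
        _ ≤ μ π := Finset.sum_le_sum fun i _ => (hterm π i).1
    · calc μ π ≤ ∑ _i : Fin 15, (3:ℝ) := Finset.sum_le_sum fun i _ => (hterm π i).2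
        _ = 45 := by norm_num
  have hμsum : ∑ π : Setoid (Fin n), μ π = 0 := by
    rw [show ∑ π : Setoid (Fin n), μ π
        = ∑ π : Setoid (Fin n), ∑ i : Fin 15, cvec p i * (if π = Svec n hn i then 1 else 0)
        from rfl, Finset.sum_comm]
    have h1 : ∀ i : Fin 15,
        ∑ π : Setoid (Fin n), cvec p i * (if π = Svec n hn i then (1:ℝ) else 0) = cvec p i := by
      intro i
      rw [← Finset.mul_sum, Finset.sum_ite_eq' Finset.univ (Svec n hn i) (fun _ => (1:ℝ))]
      simp
    rw [Finset.sum_congr rfl fun i _ => h1 i, cvec_sum]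
  have hμPhi : ∀ x, ∑ π : Setoid (Fin n), μ π * partW n p π x = 0 := by
    intro x
    have hswap : ∑ π : Setoid (Fin n), μ π * partW n p π x
        = ∑ i : Fin 15, cvec p i * partW n p (Svec n hn i) x := by
      rw [show ∑ π : Setoid (Fin n), μ π * partW n p π x
          = ∑ π : Setoid (Fin n), ∑ i : Fin 15,
              cvec p i * (if π = Svec n hn i then 1 else 0) * partW n p π x
          from Finset.sum_congr rfl fun π _ => by rw [Finset.sum_mul], Finset.sum_comm]
      refine Finset.sum_congr rfl fun i _ => ?_
      calc ∑ π : Setoid (Fin n), cvec p i * (if π = Svec n hn i then (1:ℝ) else 0) * partW n p π x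
          = ∑ π : Setoid (Fin n), (if π = Svec n hn i then cvec p i * partW n p π x else 0) :=
            Finset.sum_congr rfl fun π _ => by split_ifs <;> ring
        _ = cvec p i * partW n p (Svec n hn i) x := by
            rw [Finset.sum_ite_eq' Finset.univ (Svec n hn i)]
            simp
    rw [hswap]
    calc ∑ i : Fin 15, cvec p i * partW n p (Svec n hn i) x
        = ∑ i : Fin 15, (cvec p i * Qcl p (x ∘ Fin.castLE hn) i)
            * ∏ j ∈ Finset.univ.filter (fun j : Fin n => ¬ (j : ℕ) < 4), W1 p (x j) :=
          Finset.sum_congr rfl fun i _ => by rw [partW_Svec hn p x i]; ring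
      _ = (∑ i : Fin 15, cvec p i * Qcl p (x ∘ Fin.castLE hn) i)
            * ∏ j ∈ Finset.univ.filter (fun j : Fin n => ¬ (j : ℕ) < 4), W1 p (x j) := by
          rw [Finset.sum_mul]
      _ = 0 := by rw [Qcl_sum]; ring
  have hμ0 : μ (Svec n hn 0) = 3 := by
    have hne : ∀ i : Fin 14, Svec n hn 0 ≠ Svec n hn i.succ := by
      intro i
      fin_cases i <;> (
        simp only [Svec, Gvec] <;> norm_num [Matrix.cons_val_succ])
      · exact (EF_ker_ne hn (a := 0) (b := 1) (by decide) (by decide)).symm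
      · exact (EF_ker_ne hn (a := 0) (b := 2) (by decide) (by decide)).symm
      · exact (EF_ker_ne hn (a := 0) (b := 3) (by decide) (by decide)).symm
      · exact (EF_ker_ne hn (a := 1) (b := 2) (by decide) (by decide)).symm
      · exact (EF_ker_ne hn (a := 1) (b := 3) (by decide) (by decide)).symm
      · exact (EF_ker_ne hn (a := 2) (b := 3) (by decide) (by decide)).symm
      · exact (EF_ker_ne hn (a := 0) (b := 1) (by decide) (by decide)).symm
      · exact (EF_ker_ne hn (a := 0) (b := 2) (by decide) (by decide)).symm
      · exact (EF_ker_ne hn (a := 0) (b := 3) (by decide) (by decide)).symm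
      · exact (EF_ker_ne hn (a := 0) (b := 1) (by decide) (by decide)).symm
      · exact (EF_ker_ne hn (a := 0) (b := 1) (by decide) (by decide)).symm
      · exact (EF_ker_ne hn (a := 0) (b := 2) (by decide) (by decide)).symm
      · exact (EF_ker_ne hn (a := 1) (b := 2) (by decide) (by decide)).symm
      · exact (EF_ker_ne hn (a := 0) (b := 1) (by decide) (by decide)).symm
    have hz : ∀ i : Fin 14,
        cvec p i.succ * (if Svec n hn 0 = Svec n hn i.succ then (1:ℝ) else 0) = 0 := by
      intro i
      rw [if_neg (hne i)]
      ring
    rw [show μ (Svec n hn 0)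
        = ∑ i : Fin 15, cvec p i * (if Svec n hn 0 = Svec n hn i then 1 else 0) from rfl,
      Fin.sum_univ_succ, Finset.sum_congr rfl (fun i _ => hz i)]
    simp [cvec]
  refine ⟨fun π => 1/N + ε * μ π, fun π => 1/N - ε * μ π, ⟨?_, ?_⟩, ⟨?_, ?_⟩, ?_, ?_⟩
  · intro π
    have h1 := (hbound π).1
    have h2 : ε * (-45) ≤ ε * μ π := by
      apply mul_le_mul_of_nonneg_left h1 hε.le
    have h3 : (0:ℝ) < 1/N := by positivity
    nlinarith
  · rw [Finset.sum_add_distrib, ← Finset.mul_sum, hμsum, Finset.sum_const, Finset.card_univ,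
      mul_zero, add_zero, nsmul_eq_mul]
    rw [← hNdef]
    field_simp
  · intro π
    have h1 := (hbound π).2
    have h2 : ε * μ π ≤ ε * 45 := by
      apply mul_le_mul_of_nonneg_left h1 hε.le
    nlinarith
  · rw [Finset.sum_sub_distrib, ← Finset.mul_sum, hμsum, Finset.sum_const, Finset.card_univ,
      mul_zero, sub_zero, nsmul_eq_mul]
    rw [← hNdef]
    field_simp
  · intro h
    have h1 := congrFun h (Svec n hn 0)
    simp only [hμ0] at h1
    nlinarith
  · funext x
    rw [show Phi n p (fun π => 1/N + ε * μ π) x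
        = ∑ π : Setoid (Fin n), (1/N + ε * μ π) * partW n p π x from rfl]
    rw [show Phi n p (fun π => 1/N - ε * μ π) x
        = ∑ π : Setoid (Fin n), (1/N - ε * μ π) * partW n p π x from rfl]
    have hl : ∀ π : Setoid (Fin n), (1/N + ε * μ π) * partW n p π x
        = (1/N) * partW n p π x + ε * (μ π * partW n p π x) := fun π => by ring
    have hr : ∀ π : Setoid (Fin n), (1/N - ε * μ π) * partW n p π x
        = (1/N) * partW n p π x - ε * (μ π * partW n p π x) := fun π => by ring
    rw [Finset.sum_congr rfl fun π _ => hl π, Finset.sum_congr rfl fun π _ => hr π,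
      Finset.sum_add_distrib, Finset.sum_sub_distrib, ← Finset.mul_sum, ← Finset.mul_sum,
      hμPhi x, mul_zero, add_zero, sub_zero]


/-- **Theorem (Steif–Tykesson, Theorem 2.1(C)).**
For every `p ∈ (0,1)` with `p ≠ 1/2`, the map `Φ_p : RER_[n] → P({0,1}^n)` is injective for
`n = 2` and `n = 3`, and is not injective for every `n ≥ 4`. -/
theorem Phi_p_injective_iff_n_le_three (p : ℝ) (hp0 : 0 < p) (hp1 : p < 1) (hp : p ≠ 1/2) :
    (∀ ν₁ ν₂ : Setoid (Fin 2) → ℝ, IsRER 2 ν₁ → IsRER 2 ν₂ →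
        Phi 2 p ν₁ = Phi 2 p ν₂ → ν₁ = ν₂) ∧
    (∀ ν₁ ν₂ : Setoid (Fin 3) → ℝ, IsRER 3 ν₁ → IsRER 3 ν₂ →
        Phi 3 p ν₁ = Phi 3 p ν₂ → ν₁ = ν₂) ∧
    (∀ n : ℕ, 4 ≤ n → ∃ ν₁ ν₂ : Setoid (Fin n) → ℝ,
        IsRER n ν₁ ∧ IsRER n ν₂ ∧ ν₁ ≠ ν₂ ∧ Phi n p ν₁ = Phi n p ν₂) :=
  ⟨aux_inj2 p hp0 hp1, aux_inj3 p hp0 hp1 hp, aux_part3 p hp0 hp1⟩
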